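/- arXiv:2402.00574 — 2 statements merged into one kernel-verified Lean document; each statement's English description precedes it below -/
import Mathlib

section
/- Let X be a complex Banach space and let T be a bounded linear operator on X that is left Fredholm (left invertible modulo the ideal F(X) of finite-rank operators) or right Fredholm (right invertible modulo F(X)). Then null(T) = dim ker(T) and def(T) = dim X/ran(T), where null(T) and def(T) are the nullity and defect of T computed as an element of the Banach algebra B(X). (In particular, if T is left but not right Fredholm then def(T) = dim X/ran(T) = ∞, and if T is right but not left Fredholm then null(T) = dim ker(T) = ∞.) -/
open Filter Topology Set Metric

noncomputable section

namespace Paper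

universe u

section RingDefs

variable {A : Type u} [Ring A]

/-- `J` is a right ideal of `A` (as a set). -/
def IsRightIdeal (J : Set A) : Prop :=
  (0 : A) ∈ J ∧ (∀ a ∈ J, ∀ b ∈ J, a + b ∈ J) ∧ ∀ a ∈ J, ∀ r : A, a * r ∈ J

/-- `J` is a left ideal of `A` (as a set). -/
def IsLeftIdeal (J : Set A) : Prop :=
  (0 : A) ∈ J ∧ (∀ a ∈ J, ∀ b ∈ J, a + b ∈ J) ∧ ∀ a ∈ J, ∀ r : A, r * a ∈ J

/-- `J` is a minimal right ideal of `A`. -/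
def IsMinimalRightIdeal (J : Set A) : Prop :=
  IsRightIdeal J ∧ J ≠ {0} ∧ ∀ K : Set A, IsRightIdeal K → K ⊆ J → K = {0} ∨ K = J

/-- `J` is a minimal left ideal of `A`. -/
def IsMinimalLeftIdeal (J : Set A) : Prop :=
  IsLeftIdeal J ∧ J ≠ {0} ∧ ∀ K : Set A, IsLeftIdeal K → K ⊆ J → K = {0} ∨ K = J

/-- The sum of a finite family of subsets of `A` (as a set of finite sums). -/
def idealSum {k : ℕ} (I : Fin k → Set A) : Set A :=
  {x | ∃ f : Fin k → A, (∀ i, f i ∈ I i) ∧ x = ∑ i, f i}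

/-- The order `Θ(J)` of a right ideal `J`: the least `n` such that `J` is the sum of `n`
minimal right ideals; `Θ({0}) = 0` (empty sum) and `Θ(J) = ∞` if no such `n` exists. -/
def rightOrder (J : Set A) : ℕ∞ :=
  sInf {n : ℕ∞ | ∃ k : ℕ, n = (k : ℕ∞) ∧
    ∃ I : Fin k → Set A, (∀ i, IsMinimalRightIdeal (I i)) ∧ J = idealSum I}

/-- The order `Θ(J)` of a left ideal `J`. -/
def leftOrder (J : Set A) : ℕ∞ :=
  sInf {n : ℕ∞ | ∃ k : ℕ, n = (k : ℕ∞) ∧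
    ∃ I : Fin k → Set A, (∀ i, IsMinimalLeftIdeal (I i)) ∧ J = idealSum I}

/-- The socle of `A`: the sum of all minimal right ideals of `A` (or `{0}` if none). -/
def socle (A : Type u) [Ring A] : Set A :=
  {x | ∃ (k : ℕ) (I : Fin k → Set A), (∀ i, IsMinimalRightIdeal (I i)) ∧ x ∈ idealSum I}

/-- `A` is semiprime: the only two-sided ideal `J` with `J ^ 2 = {0}` is `{0}`. -/
def IsSemiprimeRing (A : Type u) [Ring A] : Prop :=
  ∀ J : Set A, IsLeftIdeal J → IsRightIdeal J → (∀ a ∈ J, ∀ b ∈ J, a * b = 0) → J = {0}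

/-- `A` is semisimple: its Jacobson radical (the intersection of all maximal left ideals)
is zero. -/
def IsSemisimpleRing' (A : Type u) [Ring A] : Prop :=
  sInf {J : Ideal A | J.IsMaximal} = ⊥

/-- `A` is primitive: it has a faithful irreducible representation, i.e. a faithful
simple module. -/
def IsPrimitiveRing (A : Type u) [Ring A] : Prop :=
  ∃ (M : Type u) (_ : AddCommGroup M) (_ : Module A M), IsSimpleModule A M ∧ FaithfulSMul A M

/-- `x` is a Fredholm element of `A`: it is invertible modulo the socle. -/
def IsFredholmElem (x : A) : Prop :=
  ∃ b : A, x * b - 1 ∈ socle A ∧ b * x - 1 ∈ socle A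

/-- `b` is a Drazin inverse of `x` modulo the socle:
in `A/soc(A)`, `bxb = b`, `xb = bx` and `x^k b x = x^k` for some `k`. -/
def IsDrazinInvModSocle (x b : A) : Prop :=
  b * x * b - b ∈ socle A ∧ x * b - b * x ∈ socle A ∧
    ∃ k : ℕ, x ^ k * b * x - x ^ k ∈ socle A

/-- `x` is a B-Fredholm element of `A`: its class in `A/soc(A)` is Drazin invertible. -/
def IsBFredholmElem (x : A) : Prop := ∃ b : A, IsDrazinInvModSocle x b

/-- `x` is Drazin invertible in `A`. -/
def IsDrazinInvertible (x : A) : Prop :=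
  ∃ (b : A) (k : ℕ), b * x * b = b ∧ x * b = b * x ∧ x ^ k * b * x = x ^ k

/-- The nullity of `x`: the order of the right annihilator `R(x)` of `x`. -/
def nullity (x : A) : ℕ∞ := rightOrder {a : A | x * a = 0}

/-- The defect of `x`: the order of the left annihilator `L(x)` of `x`. -/
def defect (x : A) : ℕ∞ := leftOrder {a : A | a * x = 0}

/-- The ascent `p_l(x)` of the left multiplication operator `L_x`. -/
def lAscent (x : A) : ℕ∞ :=
  sInf {n : ℕ∞ | ∃ k : ℕ, n = (k : ℕ∞) ∧
    {a : A | x ^ k * a = 0} = {a : A | x ^ (k + 1) * a = 0}}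

/-- The descent `q_l(x)` of the left multiplication operator `L_x`. -/
def lDescent (x : A) : ℕ∞ :=
  sInf {n : ℕ∞ | ∃ k : ℕ, n = (k : ℕ∞) ∧
    (Set.range fun a : A => x ^ k * a) = Set.range fun a : A => x ^ (k + 1) * a}

/-- The ascent `p_r(x)` of the right multiplication operator `R_x`. -/
def rAscent (x : A) : ℕ∞ :=
  sInf {n : ℕ∞ | ∃ k : ℕ, n = (k : ℕ∞) ∧
    {a : A | a * x ^ k = 0} = {a : A | a * x ^ (k + 1) = 0}}

/-- The descent `q_r(x)` of the right multiplication operator `R_x`. -/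
def rDescent (x : A) : ℕ∞ :=
  sInf {n : ℕ∞ | ∃ k : ℕ, n = (k : ℕ∞) ∧
    (Set.range fun a : A => a * x ^ k) = Set.range fun a : A => a * x ^ (k + 1)}

end RingDefs

section BanachDefs

variable {A : Type u} [NormedRing A] [NormedAlgebra ℂ A] [CompleteSpace A]

/-- The B-Fredholm spectrum of `x`. -/
def sigmaBF (x : A) : Set ℂ := {l : ℂ | ¬ IsBFredholmElem (x - l • (1 : A))}

/-- The B-Fredholm resolvent set of `x`. -/
def rhoBF (x : A) : Set ℂ := (sigmaBF x)ᶜ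

/-- The left spectrum of `x`: those `λ` for which `x - λ` is not left invertible. -/
def leftSpectrum (x : A) : Set ℂ := {l : ℂ | ¬ ∃ b : A, b * (x - l • (1 : A)) = 1}

/-- The right spectrum of `x`: those `λ` for which `x - λ` is not right invertible. -/
def rightSpectrum (x : A) : Set ℂ := {l : ℂ | ¬ ∃ b : A, (x - l • (1 : A)) * b = 1}

/-- The resolvent function of `x` (equal to `0` on the spectrum). -/
def resolventFn (x : A) (μ : ℂ) : A := Ring.inverse (algebraMap ℂ A μ - x)

/-- `l` is a pole of the resolvent of `x`: `l` is an isolated point of the spectrum and the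
resolvent has a pole (of some finite order `n ≥ 1`) at `l`. -/
def IsPoleOfResolvent (x : A) (l : ℂ) : Prop :=
  l ∈ spectrum ℂ x ∧ (∀ᶠ μ in 𝓝[≠] l, μ ∉ spectrum ℂ x) ∧
    ∃ n : ℕ, 1 ≤ n ∧ ∃ c : A, c ≠ 0 ∧
      Tendsto (fun μ : ℂ => (μ - l) ^ n • resolventFn x μ) (𝓝[≠] l) (𝓝 c)

/-- The set `Π(x)` of poles of the resolvent of `x`. -/
def polesSet (x : A) : Set ℂ := {l : ℂ | IsPoleOfResolvent x l}

/-- `x` has the left single-valued extension property at `l`. -/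
def HasLeftSVEPAt (x : A) (l : ℂ) : Prop :=
  ∀ U : Set ℂ, IsOpen U → l ∈ U → ∀ f : ℂ → A, DifferentiableOn ℂ f U →
    (∀ μ ∈ U, (μ • (1 : A) - x) * f μ = 0) → ∀ μ ∈ U, f μ = 0

/-- `x` has the right single-valued extension property at `l`. -/
def HasRightSVEPAt (x : A) (l : ℂ) : Prop :=
  ∀ U : Set ℂ, IsOpen U → l ∈ U → ∀ f : ℂ → A, DifferentiableOn ℂ f U →
    (∀ μ ∈ U, f μ * (μ • (1 : A) - x) = 0) → ∀ μ ∈ U, f μ = 0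

/-- The left quasinilpotent part `H_l(x)` of `x`. -/
def Hl (x : A) : Set A :=
  {a : A | Tendsto (fun n : ℕ => ‖x ^ n * a‖ ^ ((1 : ℝ) / (n : ℝ))) atTop (𝓝 0)}

/-- The right quasinilpotent part `H_r(x)` of `x`. -/
def Hr (x : A) : Set A :=
  {a : A | Tendsto (fun n : ℕ => ‖a * x ^ n‖ ^ ((1 : ℝ) / (n : ℝ))) atTop (𝓝 0)}

/-- The left analytic core `K_l(x)` of `x` (here `u n` plays the role of `a_{n+1}`). -/
def Kl (x : A) : Set A :=
  {a : A | ∃ (u : ℕ → A) (δ : ℝ), 0 < δ ∧ x * u 0 = a ∧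
    (∀ n : ℕ, x * u (n + 1) = u n) ∧ ∀ n : ℕ, ‖u n‖ ≤ δ ^ (n + 1) * ‖a‖}

/-- The right analytic core `K_r(x)` of `x`. -/
def Kr (x : A) : Set A :=
  {a : A | ∃ (u : ℕ → A) (δ : ℝ), 0 < δ ∧ u 0 * x = a ∧
    (∀ n : ℕ, u (n + 1) * x = u n) ∧ ∀ n : ℕ, ‖u n‖ ≤ δ ^ (n + 1) * ‖a‖}

/-- `a` is a left topological divisor of zero. -/
def IsLeftTDZ (a : A) : Prop :=
  ∃ u : ℕ → A, (∀ n, ‖u n‖ = 1) ∧ Tendsto (fun n => a * u n) atTop (𝓝 0)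

/-- `a` is a right topological divisor of zero. -/
def IsRightTDZ (a : A) : Prop :=
  ∃ u : ℕ → A, (∀ n, ‖u n‖ = 1) ∧ Tendsto (fun n => u n * a) atTop (𝓝 0)

/-- `x` is a Riesz element: its image in `A/cl(soc(A))` is quasinilpotent, i.e. `x - λ` is
invertible modulo the closure of the socle for every `λ ≠ 0`. -/
def IsRieszElem (x : A) : Prop :=
  ∀ l : ℂ, l ≠ 0 → ∃ b : A,
    (x - l • (1 : A)) * b - 1 ∈ closure (socle A) ∧
    b * (x - l • (1 : A)) - 1 ∈ closure (socle A)

/-- The rank of an element `a` (Aupetit–Mouton): `sup_{x ∈ A} #(σ(xa) \ {0})`. -/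
def elemRank (a : A) : ℕ∞ := ⨆ x : A, (spectrum ℂ (x * a) \ {0}).encard

open Classical in
/-- An auxiliary radius for the Riesz projection at an isolated spectral point. -/
def rieszRadius (a : A) (l : ℂ) : ℝ :=
  if (spectrum ℂ a \ {l}).Nonempty then infDist l (spectrum ℂ a \ {l}) / 2 else 1

/-- The Riesz (spectral) projection of `a` associated with `l`. -/
def rieszProjection (a : A) (l : ℂ) : A :=
  (2 * (Real.pi : ℂ) * Complex.I)⁻¹ •
    circleIntegral (fun μ : ℂ => resolventFn a μ) l (rieszRadius a l)

/-- The algebraic multiplicity `m(l, a)`: the rank of the Riesz projection of `a` at `l`. -/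
def algMult (a : A) (l : ℂ) : ℕ∞ := elemRank (rieszProjection a l)

/-- The trace `τ(a) = ∑_{λ ∈ σ(a)} λ · m(λ, a)` (Aupetit–Mouton), for `a ∈ soc(A)`. -/
def socTrace (a : A) : ℂ := ∑ᶠ l ∈ spectrum ℂ a, l * ((algMult a l).toNat : ℂ)

open Classical in
/-- The index of a B-Fredholm element `a`: `i(a) = τ(a a₀ - a₀ a)` where `π(a₀)` is a Drazin
inverse of `π(a)` (this is independent of the choice of `a₀`). -/
def bfIndex (a : A) : ℂ :=
  if h : ∃ b : A, IsDrazinInvModSocle a b then socTrace (a * h.choose - h.choose * a) else 0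

/-- `a` is B-Weyl: B-Fredholm of index zero. -/
def IsBWeylElem (a : A) : Prop := IsBFredholmElem a ∧ bfIndex a = 0

/-- The B-Weyl spectrum of `a`. -/
def sigmaBW (a : A) : Set ℂ := {l : ℂ | ¬ IsBWeylElem (a - l • (1 : A))}

end BanachDefs

end Paper

/-!
The minimal right ideals of `B(X)` are the sets `{g ⊗ y | g ∈ X*}` with `y ≠ 0`, and the minimal
left ideals are the sets `{f ⊗ y | y ∈ X}` with `f ≠ 0`. Since `R(T) = {a | ran a ⊆ ker T}`, it is
a sum of `k` minimal right ideals exactly when `ker T` is spanned by `k` vectors, so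
`null(T) = dim ker T` for every `T`. Dually `L(T) = {a | cl(ran T) ⊆ ker a}`, and by Hahn–Banach it
is a sum of `k` minimal left ideals exactly when `cl(ran T)` is cut out by `k` functionals, so
`def(T) = codim cl(ran T)`. A one-sided Fredholm operator has closed range: if `TS - 1` has finite
rank, `ran T` contains the closed finite-codimensional subspace `ker(TS - 1)`; if `ST - 1` has
finite rank, `T` is bounded below on `ker(ST - 1)`, so it maps that closed finite-codimensional
subspace onto a closed subspace.
-/

namespace Paper

section Zero

variable {M : Type*} [Zero M]

theorem exists_ne_zero_of_ne_singleton_zero {K : Set M} (h0 : (0 : M) ∈ K) (hK : K ≠ {0}) :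
    ∃ a ∈ K, a ≠ 0 :=
  ((nontrivial_iff_ne_singleton h0).2 hK).exists_ne 0

theorem inter_ne_singleton_zero {J K : Set M} {a : M} (haJ : a ∈ J) (haK : a ∈ K) (ha : a ≠ 0) :
    J ∩ K ≠ {0} :=
  fun h => ha (h.subset ⟨haJ, haK⟩)

end Zero

section Ring

variable {A : Type*} [Ring A]

theorem IsRightIdeal.inter {J K : Set A} (hJ : IsRightIdeal J) (hK : IsRightIdeal K) :
    IsRightIdeal (J ∩ K) :=
  ⟨⟨hJ.1, hK.1⟩, fun a ha b hb => ⟨hJ.2.1 a ha.1 b hb.1, hK.2.1 a ha.2 b hb.2⟩,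
    fun a ha r => ⟨hJ.2.2 a ha.1 r, hK.2.2 a ha.2 r⟩⟩

theorem IsLeftIdeal.inter {J K : Set A} (hJ : IsLeftIdeal J) (hK : IsLeftIdeal K) :
    IsLeftIdeal (J ∩ K) :=
  ⟨⟨hJ.1, hK.1⟩, fun a ha b hb => ⟨hJ.2.1 a ha.1 b hb.1, hK.2.1 a ha.2 b hb.2⟩,
    fun a ha r => ⟨hJ.2.2 a ha.1 r, hK.2.2 a ha.2 r⟩⟩

theorem IsMinimalRightIdeal.eq_of_mem_of_mem {J K : Set A} (hJ : IsMinimalRightIdeal J)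
    (hK : IsMinimalRightIdeal K) {a : A} (haJ : a ∈ J) (haK : a ∈ K) (ha : a ≠ 0) : J = K := by
  have hne := inter_ne_singleton_zero haJ haK ha
  have hJK := (hJ.2.2 _ (hJ.1.inter hK.1) inter_subset_left).resolve_left hne
  have hKJ := (hK.2.2 _ (hJ.1.inter hK.1) inter_subset_right).resolve_left hne
  rw [← hJK, hKJ]

theorem IsMinimalLeftIdeal.eq_of_mem_of_mem {J K : Set A} (hJ : IsMinimalLeftIdeal J)
    (hK : IsMinimalLeftIdeal K) {a : A} (haJ : a ∈ J) (haK : a ∈ K) (ha : a ≠ 0) : J = K := by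
  have hne := inter_ne_singleton_zero haJ haK ha
  have hJK := (hJ.2.2 _ (hJ.1.inter hK.1) inter_subset_left).resolve_left hne
  have hKJ := (hK.2.2 _ (hJ.1.inter hK.1) inter_subset_right).resolve_left hne
  rw [← hJK, hKJ]

end Ring

theorem sInf_eq_toENat {P : ℕ → Prop} {c : Cardinal} (hle : ∀ k, P k → c ≤ k)
    (hex : ∀ n : ℕ, c = n → P n) : sInf {n : ℕ∞ | ∃ k : ℕ, n = k ∧ P k} = c.toENat := by
  rcases lt_or_ge c Cardinal.aleph0 with hc | hc
  · obtain ⟨n, rfl⟩ := Cardinal.lt_aleph0.1 hc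
    rw [Cardinal.toENat_nat]
    refine le_antisymm (sInf_le ⟨n, rfl, hex n rfl⟩) (le_sInf ?_)
    rintro _ ⟨k, rfl, hk⟩
    exact_mod_cast hle k hk
  · have hempty : {n : ℕ∞ | ∃ k : ℕ, n = k ∧ P k} = ∅ :=
      eq_empty_iff_forall_notMem.2 fun _ ⟨k, _, hk⟩ =>
        Cardinal.natCast_lt_aleph0.not_ge (hc.trans (hle k hk))
    rw [hempty, sInf_empty, Cardinal.toENat_eq_top.2 hc]

section Operators

open ContinuousLinearMap

variable {X : Type*} [NormedAddCommGroup X] [NormedSpace ℂ X]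

def rankOneRightIdeal (y : X) : Set (X →L[ℂ] X) := Set.range fun g : X →L[ℂ] ℂ => g.smulRight y

def rankOneLeftIdeal (f : X →L[ℂ] ℂ) : Set (X →L[ℂ] X) := Set.range f.smulRight

theorem smulRight_mem_rankOneRightIdeal (g : X →L[ℂ] ℂ) (y : X) :
    g.smulRight y ∈ rankOneRightIdeal y :=
  ⟨g, rfl⟩

theorem smulRight_mem_rankOneLeftIdeal (f : X →L[ℂ] ℂ) (y : X) :
    f.smulRight y ∈ rankOneLeftIdeal f :=
  ⟨y, rfl⟩

theorem smulRight_ne_zero {f : X →L[ℂ] ℂ} {y : X} (hf : f ≠ 0) (hy : y ≠ 0) :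
    f.smulRight y ≠ 0 := by
  obtain ⟨v, hv⟩ := DFunLike.ne_iff.1 hf
  refine DFunLike.ne_iff.2 ⟨v, ?_⟩
  simpa [smulRight_apply, hy] using hv

theorem isRightIdeal_rankOneRightIdeal (y : X) : IsRightIdeal (rankOneRightIdeal y) := by
  refine ⟨⟨0, by ext; simp⟩, ?_, ?_⟩
  · rintro _ ⟨g, rfl⟩ _ ⟨h, rfl⟩
    exact ⟨g + h, by ext; simp [add_smul]⟩
  · rintro _ ⟨g, rfl⟩ r
    exact ⟨g.comp r, by ext; simp⟩

theorem isLeftIdeal_rankOneLeftIdeal (f : X →L[ℂ] ℂ) : IsLeftIdeal (rankOneLeftIdeal f) := by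
  refine ⟨⟨0, by ext; simp⟩, ?_, ?_⟩
  · rintro _ ⟨y, rfl⟩ _ ⟨z, rfl⟩
    exact ⟨y + z, by ext; simp⟩
  · rintro _ ⟨y, rfl⟩ r
    exact ⟨r y, by ext; simp⟩

theorem isMinimalRightIdeal_rankOneRightIdeal {y : X} (hy : y ≠ 0) :
    IsMinimalRightIdeal (rankOneRightIdeal y) := by
  obtain ⟨f, hf⟩ := SeparatingDual.exists_eq_one (R := ℂ) hy
  refine ⟨isRightIdeal_rankOneRightIdeal y, fun h => ?_, fun K hK hKsub => ?_⟩
  · exact smulRight_ne_zero (by rintro rfl; simp at hf) hy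
      (h.subset (smulRight_mem_rankOneRightIdeal f y))
  refine or_iff_not_imp_left.2 fun hK0 => hKsub.antisymm ?_
  obtain ⟨a, haK, ha⟩ := exists_ne_zero_of_ne_singleton_zero hK.1 hK0
  obtain ⟨g, rfl⟩ := hKsub haK
  obtain ⟨w, hw : g w ≠ 0⟩ := DFunLike.ne_iff.1 (show g ≠ 0 by rintro rfl; simp at ha)
  rintro _ ⟨h, rfl⟩
  have : h.smulRight y = g.smulRight y * ((g w)⁻¹ • h).smulRight w := by
    ext v
    simp [smul_smul, mul_right_comm _ (h v), inv_mul_cancel₀ hw]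
  change h.smulRight y ∈ K
  rw [this]
  exact hK.2.2 _ haK _

theorem isMinimalLeftIdeal_rankOneLeftIdeal {f : X →L[ℂ] ℂ} (hf : f ≠ 0) :
    IsMinimalLeftIdeal (rankOneLeftIdeal f) := by
  obtain ⟨w, hw : f w ≠ 0⟩ := DFunLike.ne_iff.1 hf
  refine ⟨isLeftIdeal_rankOneLeftIdeal f, fun h => ?_, fun K hK hKsub => ?_⟩
  · exact smulRight_ne_zero hf (by rintro rfl; simp at hw)
      (h.subset (smulRight_mem_rankOneLeftIdeal f w))
  refine or_iff_not_imp_left.2 fun hK0 => hKsub.antisymm ?_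
  obtain ⟨a, haK, ha⟩ := exists_ne_zero_of_ne_singleton_zero hK.1 hK0
  obtain ⟨y, rfl⟩ := hKsub haK
  obtain ⟨g, hg⟩ := SeparatingDual.exists_eq_one (R := ℂ) (x := y) (by rintro rfl; simp at ha)
  rintro _ ⟨z, rfl⟩
  have : f.smulRight z = g.smulRight z * f.smulRight y := by
    ext v
    simp [hg]
  rw [this]
  exact hK.2.2 _ haK _

theorem IsMinimalRightIdeal.exists_eq_rankOneRightIdeal {J : Set (X →L[ℂ] X)}
    (hJ : IsMinimalRightIdeal J) : ∃ y : X, J = rankOneRightIdeal y := by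
  obtain ⟨a, haJ, ha⟩ := exists_ne_zero_of_ne_singleton_zero hJ.1.1 hJ.2.1
  obtain ⟨v, hv : a v ≠ 0⟩ := DFunLike.ne_iff.1 ha
  obtain ⟨f, hf⟩ := SeparatingDual.exists_eq_one (R := ℂ) (x := v) (by rintro rfl; simp at hv)
  have hfa : a * f.smulRight v = f.smulRight (a v) := by
    ext
    simp
  refine ⟨a v, hJ.eq_of_mem_of_mem (isMinimalRightIdeal_rankOneRightIdeal hv) (hJ.1.2.2 a haJ _)
    (hfa ▸ smulRight_mem_rankOneRightIdeal f (a v)) ?_⟩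
  rw [hfa]
  exact smulRight_ne_zero (by rintro rfl; simp at hf) hv

theorem IsMinimalLeftIdeal.exists_eq_rankOneLeftIdeal {J : Set (X →L[ℂ] X)}
    (hJ : IsMinimalLeftIdeal J) : ∃ f : X →L[ℂ] ℂ, J = rankOneLeftIdeal f := by
  obtain ⟨a, haJ, ha⟩ := exists_ne_zero_of_ne_singleton_zero hJ.1.1 hJ.2.1
  obtain ⟨v, hv : a v ≠ 0⟩ := DFunLike.ne_iff.1 ha
  obtain ⟨g, hg⟩ := SeparatingDual.exists_eq_one (R := ℂ) hv
  have hga : g.smulRight (a v) * a = (g.comp a).smulRight (a v) := by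
    ext
    simp
  have hf : g.comp a ≠ 0 := by
    intro h
    simpa [hg] using congrArg (· v) h
  refine ⟨g.comp a, hJ.eq_of_mem_of_mem (isMinimalLeftIdeal_rankOneLeftIdeal hf)
    (hJ.1.2.2 a haJ _) (hga ▸ smulRight_mem_rankOneLeftIdeal _ (a v)) ?_⟩
  rw [hga]
  exact smulRight_ne_zero hf hv

theorem mul_eq_zero_iff_range_le_ker (T a : X →L[ℂ] X) :
    T * a = 0 ↔ LinearMap.range (a : X →ₗ[ℂ] X) ≤ LinearMap.ker (T : X →ₗ[ℂ] X) := by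
  rw [LinearMap.range_le_ker_iff, ContinuousLinearMap.ext_iff, LinearMap.ext_iff]
  rfl

theorem mul_eq_zero_iff_closure_range_le_ker (a T : X →L[ℂ] X) :
    a * T = 0 ↔
      (LinearMap.range (T : X →ₗ[ℂ] X)).topologicalClosure ≤ LinearMap.ker (a : X →ₗ[ℂ] X) := by
  rw [mul_eq_zero_iff_range_le_ker]
  exact ⟨fun h => Submodule.topologicalClosure_minimal _ h a.isClosed_ker,
    (Submodule.le_topologicalClosure _).trans⟩

theorem le_span_of_subset_idealSum {V : Submodule ℂ X} {k : ℕ} {y : Fin k → X}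
    (h : {a : X →L[ℂ] X | LinearMap.range (a : X →ₗ[ℂ] X) ≤ V} ⊆
      idealSum fun i => rankOneRightIdeal (y i)) :
    V ≤ Submodule.span ℂ (Set.range y) := by
  intro z hz
  rcases eq_or_ne z 0 with rfl | hz0
  · exact zero_mem _
  obtain ⟨f, hf⟩ := SeparatingDual.exists_eq_one (R := ℂ) hz0
  have hfz : f.smulRight z ∈ {a : X →L[ℂ] X | LinearMap.range (a : X →ₗ[ℂ] X) ≤ V} := by
    rintro _ ⟨v, rfl⟩
    exact V.smul_mem (f v) hz
  obtain ⟨b, hb, hsum⟩ := h hfz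
  choose g hg using hb
  have hz_eq : z = ∑ i, g i z • y i := by simpa [hf, ← hg] using congrArg (· z) hsum
  rw [hz_eq]
  exact sum_mem fun i _ => Submodule.smul_mem _ _ (Submodule.subset_span ⟨i, rfl⟩)

theorem rank_le_of_subset_idealSum {V : Submodule ℂ X} {k : ℕ} {y : Fin k → X}
    (h : {a : X →L[ℂ] X | LinearMap.range (a : X →ₗ[ℂ] X) ≤ V} ⊆
      idealSum fun i => rankOneRightIdeal (y i)) :
    Module.rank ℂ V ≤ k :=
  calc Module.rank ℂ V ≤ Module.rank ℂ (Submodule.span ℂ (Set.range y)) :=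
        Submodule.rank_mono (le_span_of_subset_idealSum h)
    _ ≤ Cardinal.mk (Set.range y) := rank_span_le _
    _ ≤ k := by simpa using Cardinal.mk_range_le_lift (f := y)

theorem exists_setOf_range_le_eq_idealSum {V : Submodule ℂ X} {n : ℕ}
    (hV : Module.rank ℂ V = n) :
    ∃ y : Fin n → X, (∀ i, y i ≠ 0) ∧
      {a : X →L[ℂ] X | LinearMap.range (a : X →ₗ[ℂ] X) ≤ V} =
        idealSum fun i => rankOneRightIdeal (y i) := by
  have := Module.finite_of_rank_eq_nat hV
  let b := Module.finBasisOfFinrankEq ℂ V (Module.finrank_eq_of_rank_eq hV)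
  refine ⟨fun i => b i, fun i => by simpa using b.ne_zero i, subset_antisymm ?_ ?_⟩
  · intro a ha
    let a' : X →L[ℂ] V := a.codRestrict V fun v => ha ⟨v, rfl⟩
    refine ⟨fun i => ((LinearMap.toContinuousLinearMap (b.coord i)).comp a').smulRight (b i),
      fun i => smulRight_mem_rankOneRightIdeal _ _, ?_⟩
    ext v
    have hv : a v = (a' v : X) := rfl
    rw [sum_apply, hv]
    conv_lhs => rw [← b.sum_repr (a' v)]
    simp only [Submodule.coe_sum, Submodule.coe_smul, smulRight_apply, comp_apply,
      LinearMap.coe_toContinuousLinearMap', Module.Basis.coord_apply]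
  · rintro _ ⟨c, hc, rfl⟩ _ ⟨v, rfl⟩
    choose g hg using hc
    simp only [ContinuousLinearMap.coe_coe, sum_apply, ← hg, smulRight_apply]
    exact sum_mem fun i _ => V.smul_mem _ (b i).2

theorem rank_quotient_le_of_subset_idealSum {N : Submodule ℂ X} (hN : IsClosed (N : Set X))
    {k : ℕ} {f : Fin k → X →L[ℂ] ℂ}
    (h : {a : X →L[ℂ] X | N ≤ LinearMap.ker (a : X →ₗ[ℂ] X)} ⊆
      idealSum fun i => rankOneLeftIdeal (f i)) :
    Module.rank ℂ (X ⧸ N) ≤ k := by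
  have : IsClosed (N : Set X) := hN
  set φ : X →ₗ[ℂ] Fin k → ℂ := LinearMap.pi fun i => (f i : X →ₗ[ℂ] ℂ)
  have hker : LinearMap.ker φ ≤ N := by
    intro z hz
    by_contra hzN
    obtain ⟨g, hg⟩ := SeparatingDual.exists_eq_one (R := ℂ)
      (x := (Submodule.Quotient.mk z : X ⧸ N)) (by simpa [Submodule.Quotient.mk_eq_zero] using hzN)
    have hgz : (g.comp N.mkQL).smulRight z ∈
        {a : X →L[ℂ] X | N ≤ LinearMap.ker (a : X →ₗ[ℂ] X)} := by
      intro x hx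
      simp [(Submodule.Quotient.mk_eq_zero N).2 hx]
    obtain ⟨c, hc, hsum⟩ := h hgz
    choose y hy using hc
    have hz_eq : z = ∑ i, f i z • y i := by simpa [hg, ← hy] using congrArg (· z) hsum
    have hfz : ∀ i, f i z = 0 := fun i => congrFun (LinearMap.mem_ker.1 hz) i
    exact hzN (by rw [hz_eq]; simp [hfz])
  have hφ := LinearMap.lift_rank_le_of_injective _
    (LinearMap.ker_eq_bot.1 (Submodule.ker_liftQ_eq_bot _ φ le_rfl le_rfl))
  calc Module.rank ℂ (X ⧸ N) ≤ Module.rank ℂ (X ⧸ LinearMap.ker φ) :=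
        LinearMap.rank_le_of_surjective _ (Submodule.factor_surjective hker)
    _ ≤ k := by simpa using hφ

theorem exists_setOf_le_ker_eq_idealSum {N : Submodule ℂ X} (hN : IsClosed (N : Set X)) {n : ℕ}
    (hrank : Module.rank ℂ (X ⧸ N) = n) :
    ∃ f : Fin n → X →L[ℂ] ℂ, (∀ i, f i ≠ 0) ∧
      {a : X →L[ℂ] X | N ≤ LinearMap.ker (a : X →ₗ[ℂ] X)} =
        idealSum fun i => rankOneLeftIdeal (f i) := by
  have : IsClosed (N : Set X) := hN
  have := Module.finite_of_rank_eq_nat hrank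
  let b := Module.finBasisOfFinrankEq ℂ (X ⧸ N) (Module.finrank_eq_of_rank_eq hrank)
  let f i : X →L[ℂ] ℂ := (LinearMap.toContinuousLinearMap (b.coord i)).comp N.mkQL
  have hf : ∀ i x, f i x = b.coord i (N.mkQ x) := fun _ _ => rfl
  refine ⟨f, fun i hi => ?_, subset_antisymm ?_ ?_⟩
  · obtain ⟨x, hx⟩ := N.mkQ_surjective (b i)
    simpa [hf, hx] using congrArg (· x) hi
  · intro a ha
    refine ⟨fun i => (f i).smulRight (N.liftQ (a : X →ₗ[ℂ] X) ha (b i)),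
      fun i => smulRight_mem_rankOneLeftIdeal _ _, ?_⟩
    ext x
    have hx : a x = N.liftQ (a : X →ₗ[ℂ] X) ha (N.mkQ x) := rfl
    rw [sum_apply, hx, ← b.sum_repr (N.mkQ x), map_sum]
    simp [hf]
  · rintro _ ⟨c, hc, rfl⟩ x hx
    choose y hy using hc
    simp [← hy, hf, (Submodule.Quotient.mk_eq_zero N).2 hx]

theorem nullity_eq_toENat_rank_ker (T : X →L[ℂ] X) :
    nullity T = (Module.rank ℂ (LinearMap.ker (T : X →ₗ[ℂ] X))).toENat := by
  have hR : {a : X →L[ℂ] X | T * a = 0} =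
      {a : X →L[ℂ] X | LinearMap.range (a : X →ₗ[ℂ] X) ≤ LinearMap.ker (T : X →ₗ[ℂ] X)} :=
    Set.ext fun a => mul_eq_zero_iff_range_le_ker T a
  refine (congrArg rightOrder hR).trans (sInf_eq_toENat ?_ ?_)
  · rintro k ⟨I, hI, hsum⟩
    choose y hy using fun i => (hI i).exists_eq_rankOneRightIdeal
    exact rank_le_of_subset_idealSum (hsum.trans (by rw [funext hy])).subset
  · intro n hn
    obtain ⟨y, hy, hsum⟩ := exists_setOf_range_le_eq_idealSum hn
    exact ⟨_, fun i => isMinimalRightIdeal_rankOneRightIdeal (hy i), hsum⟩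

theorem defect_eq_toENat_rank_quotient_closure_range (T : X →L[ℂ] X) :
    defect T = (Module.rank ℂ
      (X ⧸ (LinearMap.range (T : X →ₗ[ℂ] X)).topologicalClosure)).toENat := by
  have hL : {a : X →L[ℂ] X | a * T = 0} =
      {a : X →L[ℂ] X | (LinearMap.range (T : X →ₗ[ℂ] X)).topologicalClosure ≤
        LinearMap.ker (a : X →ₗ[ℂ] X)} :=
    Set.ext fun a => mul_eq_zero_iff_closure_range_le_ker a T
  have hN := Submodule.isClosed_topologicalClosure (LinearMap.range (T : X →ₗ[ℂ] X))
  refine (congrArg leftOrder hL).trans (sInf_eq_toENat ?_ ?_)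
  · rintro k ⟨I, hI, hsum⟩
    choose f hf using fun i => (hI i).exists_eq_rankOneLeftIdeal
    exact rank_quotient_le_of_subset_idealSum hN (hsum.trans (by rw [funext hf])).subset
  · intro n hn
    obtain ⟨f, hf, hsum⟩ := exists_setOf_le_ker_eq_idealSum hN hn
    exact ⟨_, fun i => isMinimalLeftIdeal_rankOneLeftIdeal (hf i), hsum⟩

theorem isClosed_range_of_rightInverse_modFiniteRank {T S : X →L[ℂ] X}
    (hF : Module.Finite ℂ (LinearMap.range ((T * S - 1 : X →L[ℂ] X) : X →ₗ[ℂ] X))) :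
    IsClosed (LinearMap.range (T : X →ₗ[ℂ] X) : Set X) := by
  have : (LinearMap.ker ((T * S - 1 : X →L[ℂ] X) : X →ₗ[ℂ] X)).CoFG :=
    Submodule.range_fg_iff_ker_cofg.1 (Module.Finite.iff_fg.1 hF)
  refine Submodule.isClosed_mono_of_finiteDimensional_quotient (T * S - 1).isClosed_ker
    fun x hx => ⟨S x, ?_⟩
  simpa [sub_eq_zero] using hx

theorem isClosed_range_of_leftInverse_modFiniteRank [CompleteSpace X] {T S : X →L[ℂ] X}
    (hF : Module.Finite ℂ (LinearMap.range ((S * T - 1 : X →L[ℂ] X) : X →ₗ[ℂ] X))) :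
    IsClosed (LinearMap.range (T : X →ₗ[ℂ] X) : Set X) := by
  set A := LinearMap.ker ((S * T - 1 : X →L[ℂ] X) : X →ₗ[ℂ] X)
  have : A.CoFG := Submodule.range_fg_iff_ker_cofg.1 (Module.Finite.iff_fg.1 hF)
  have : CompleteSpace A := (S * T - 1).isClosed_ker.completeSpace_coe
  have hbound : ∀ x : A, ‖x‖ ≤ ‖S‖ * ‖T.comp A.subtypeL x‖ := by
    intro x
    have hx : S (T x) = x := by
      simpa [sub_eq_zero] using (show (S * T - 1) x = 0 from x.2)
    calc ‖x‖ = ‖S (T x)‖ := by rw [hx, Submodule.coe_norm]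
      _ ≤ ‖S‖ * ‖T x‖ := S.le_opNorm _
  have hclosed := ((T.comp A.subtypeL).antilipschitz_of_bound (K := ‖S‖₊) hbound).isClosed_range
    (T.comp A.subtypeL).uniformContinuous
  refine LinearMap.isClosed_range_of_isClosed_map_of_finiteDimensional_quotient (s := A) ?_
  convert hclosed using 1
  ext
  simp

end Operators

end Paper

open Paper in
/-- for a left or right Fredholm operator `T` on a complex Banach space `X`,
the nullity and defect of `T` computed as an element of the Banach algebra `B(X)` agree with
`dim ker T` and `dim X/ran T`. -/
theorem statement_0 {X : Type*} [NormedAddCommGroup X] [NormedSpace ℂ X] [CompleteSpace X]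
    (T : X →L[ℂ] X)
    (hT : (∃ S : X →L[ℂ] X, S * T - 1 ∈
            {F : X →L[ℂ] X | Module.Finite ℂ (LinearMap.range (F : X →ₗ[ℂ] X))}) ∨
          (∃ S : X →L[ℂ] X, T * S - 1 ∈
            {F : X →L[ℂ] X | Module.Finite ℂ (LinearMap.range (F : X →ₗ[ℂ] X))})) :
    nullity T = Cardinal.toENat (Module.rank ℂ (LinearMap.ker (T : X →ₗ[ℂ] X))) ∧
    defect T = Cardinal.toENat (Module.rank ℂ (X ⧸ LinearMap.range (T : X →ₗ[ℂ] X))) := by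
  have hclosed : IsClosed (LinearMap.range (T : X →ₗ[ℂ] X) : Set X) := by
    rcases hT with ⟨S, hS⟩ | ⟨S, hS⟩
    · exact isClosed_range_of_leftInverse_modFiniteRank hS
    · exact isClosed_range_of_rightInverse_modFiniteRank hS
  refine ⟨nullity_eq_toENat_rank_ker T, ?_⟩
  rw [defect_eq_toENat_rank_quotient_closure_range, hclosed.submodule_topologicalClosure_eq]
end
end

section
/- Let 𝒜 be an algebra with a unit. If a ∈ 𝒜 is Drazin invertible and b ∈ 𝒜 is a nilpotent element commuting with a, then a + b is Drazin invertible. -/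
open Filter Topology Set Metric

noncomputable section

/-!
If `d` is a Drazin inverse of `a`, the idempotent `a d` and then `d` itself commute with every
element commuting with `a`; in particular `b d` is nilpotent and `w = d (1 + b d)⁻¹` is defined.
Then `(a + b) w = a d = w (a + b)`, so `w (a + b) w = w`, and
`(a + b) - (a + b) w (a + b) = (a - a d a) + (1 - a d) b` is a sum of commuting nilpotents.
Finally, any `x` with a commuting `w` such that `w x w = w` and `x - x w x` is nilpotent is
Drazin invertible: `1 - w x` is idempotent, so `x ^ n (1 - w x) = (x (1 - w x)) ^ n` vanishes.
-/

section Drazin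

open Paper

variable {A : Type*} [Ring A] {a d x w : A} {k : ℕ}

theorem pow_succ_mul_mul_eq_of_drazin (had : Commute a d) (hk : a ^ k * d * a = a ^ k) :
    a ^ (k + 1) * (a * d) = a ^ (k + 1) := by
  rw [had.eq, pow_succ', mul_assoc a, ← mul_assoc (a ^ k), hk]

theorem isIdempotentElem_mul_of_drazin (hdad : d * a * d = d) : IsIdempotentElem (a * d) := by
  rw [IsIdempotentElem, mul_assoc, ← mul_assoc d, hdad]

theorem mul_eq_pow_mul_pow_of_drazin (hdad : d * a * d = d) (had : Commute a d) (n : ℕ) :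
    a * d = d ^ (n + 1) * a ^ (n + 1) := by
  rw [← had.symm.mul_pow, ← had.eq, (isIdempotentElem_mul_of_drazin hdad).pow_succ_eq]

/-- With `p = a d = d ^ (k + 1) a ^ (k + 1) = a ^ (k + 1) d ^ (k + 1)` and
`a ^ (k + 1) (1 - p) = 0`, both `p x (1 - p)` and `(1 - p) x p` vanish. -/
theorem commute_mul_drazin_of_commute (hdad : d * a * d = d) (had : Commute a d)
    (hk : a ^ k * d * a = a ^ k) (hx : Commute a x) : Commute (a * d) x := by
  have hpow := mul_eq_pow_mul_pow_of_drazin hdad had k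
  have hxa : x * a ^ (k + 1) = a ^ (k + 1) * x := ((hx.pow_left (k + 1)).eq).symm
  have hap : a ^ (k + 1) * (1 - a * d) = 0 := by
    rw [mul_sub, mul_one, pow_succ_mul_mul_eq_of_drazin had hk, sub_self]
  have hpa : (1 - a * d) * a ^ (k + 1) = 0 := by
    rw [← ((Commute.one_right _).sub_right
      (((Commute.refl a).mul_right had).pow_left (k + 1))).eq, hap]
  have hpx : a * d * x * (1 - a * d) = 0 :=
    calc a * d * x * (1 - a * d) = d ^ (k + 1) * a ^ (k + 1) * x * (1 - a * d) := by rw [← hpow]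
      _ = d ^ (k + 1) * x * (a ^ (k + 1) * (1 - a * d)) := by
        rw [mul_assoc (d ^ (k + 1)), ← hxa]; simp only [mul_assoc]
      _ = 0 := by rw [hap, mul_zero]
  have hxp : (1 - a * d) * x * (a * d) = 0 :=
    calc (1 - a * d) * x * (a * d) = (1 - a * d) * x * (a ^ (k + 1) * d ^ (k + 1)) := by
          rw [(had.pow_pow _ _).eq, ← hpow]
      _ = (1 - a * d) * a ^ (k + 1) * x * d ^ (k + 1) := by
        rw [mul_assoc (1 - a * d), ← mul_assoc x, hxa]; simp only [mul_assoc]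
      _ = 0 := by rw [hpa, zero_mul, zero_mul]
  rw [mul_sub, mul_one, sub_eq_zero] at hpx
  rw [sub_mul, one_mul, sub_mul, sub_eq_zero] at hxp
  exact hpx.trans hxp.symm

theorem commute_drazin_of_commute (hdad : d * a * d = d) (had : Commute a d)
    (hk : a ^ k * d * a = a ^ k) (hx : Commute a x) : Commute d x := by
  have hp := commute_mul_drazin_of_commute hdad had hk hx
  calc d * x = d * (a * d) * x := by rw [← mul_assoc, hdad]
    _ = d * (x * (a * d)) := by rw [mul_assoc, hp.eq]
    _ = d * (a * x) * d := by rw [← mul_assoc x, ← hx.eq]; simp only [mul_assoc]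
    _ = a * d * x * d := by rw [← mul_assoc, ← had.eq]
    _ = x * (a * d * d) := by rw [hp.eq]; simp only [mul_assoc]
    _ = x * d := by rw [had.eq, hdad]

theorem isNilpotent_sub_mul_mul_of_drazin (had : Commute a d) (hk : a ^ k * d * a = a ^ k) :
    IsNilpotent (a - a * d * a) := by
  have hq : Commute a (1 - a * d) :=
    (Commute.one_right a).sub_right ((Commute.refl a).mul_right had)
  refine ⟨k + 1, ?_⟩
  rw [mul_assoc, ← had.eq, ← mul_one_sub, hq.mul_pow, pow_succ' (1 - a * d), ← mul_assoc,
    mul_sub, mul_one, pow_succ_mul_mul_eq_of_drazin had hk, sub_self, zero_mul]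

theorem isDrazinInvertible_of_isNilpotent_sub (hxw : Commute x w) (hwxw : w * x * w = w)
    (hnil : IsNilpotent (x - x * w * x)) : IsDrazinInvertible x := by
  obtain ⟨N, hN⟩ := hnil
  have hq : IsIdempotentElem (1 - w * x) := by
    refine IsIdempotentElem.one_sub ?_
    rw [IsIdempotentElem, ← mul_assoc, hwxw]
  have hxq : Commute x (1 - w * x) := (Commute.one_right x).sub_right (hxw.mul_right (.refl x))
  refine ⟨w, N + 1, hwxw, hxw.eq, ?_⟩
  have : x ^ (N + 1) * (1 - w * x) = 0 := by
    rw [← hq.pow_succ_eq N, ← hxq.mul_pow, mul_one_sub, ← mul_assoc, pow_succ, hN, zero_mul]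
  rw [mul_one_sub, sub_eq_zero, ← mul_assoc] at this
  exact this.symm

theorem add_mul_drazin_mul_inv_eq {b : A} {u : Aˣ} (hdad : d * a * d = d) (had : Commute a d)
    (hab : Commute a b) (hdb : Commute d b) (hu : ↑u = 1 + b * d) :
    (a + b) * (d * ↑u⁻¹) = a * d := by
  have hbd : a * d * (b * d) = b * d := by
    rw [← mul_assoc, (hab.mul_left hdb).eq, mul_assoc b, had.eq, hdad]
  calc (a + b) * (d * ↑u⁻¹) = a * d * ↑u * ↑u⁻¹ := by
        rw [hu, mul_one_add, hbd, ← mul_assoc, add_mul]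
    _ = a * d := by rw [mul_assoc, u.mul_inv, mul_one]

theorem isNilpotent_add_sub_mul_drazin_mul {b : A} (had : Commute a d)
    (hk : a ^ k * d * a = a ^ k) (hab : Commute a b) (hdb : Commute d b) (hb : IsNilpotent b) :
    IsNilpotent (a + b - a * d * (a + b)) := by
  have hq : Commute a (1 - a * d) :=
    (Commute.one_right a).sub_right ((Commute.refl a).mul_right had)
  have hpq : Commute (a * d) (1 - a * d) := (Commute.one_right _).sub_right (.refl _)
  have hpb : Commute (a * d) b := hab.mul_left hdb
  have hsplit : a + b - a * d * (a + b) = (a - a * d * a) + (1 - a * d) * b := by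
    rw [mul_add, sub_mul, one_mul]; abel
  rw [hsplit]
  refine Commute.isNilpotent_add ?_ (isNilpotent_sub_mul_mul_of_drazin had hk)
    (((Commute.one_left b).sub_left hpb).isNilpotent_mul_left hb)
  exact (hq.sub_left (hpq.mul_left hq)).mul_right (hab.sub_left (hpb.mul_left hab))

end Drazin

open Paper in
theorem statement_14_general {A : Type*} [Ring A] (a b : A)
    (ha : IsDrazinInvertible a) (hb : IsNilpotent b) (hab : a * b = b * a) :
    IsDrazinInvertible (a + b) := by
  obtain ⟨d, k, hdad, had, hk⟩ := ha
  have had : Commute a d := had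
  have hab : Commute a b := hab
  have hdb : Commute d b := commute_drazin_of_commute hdad had hk hab
  obtain ⟨u, hu⟩ := (hdb.symm.isNilpotent_mul_right hb).isUnit_one_add
  have hu_comm {x : A} (hxb : Commute x b) (hxd : Commute x d) : Commute x ↑u⁻¹ :=
    (hu ▸ (Commute.one_right x).add_right (hxb.mul_right hxd)).units_inv_right
  have hxw : Commute (a + b) (d * ↑u⁻¹) :=
    (had.add_left hdb.symm).mul_right ((hu_comm hab had).add_left (hu_comm (.refl b) hdb.symm))
  have hxw_eq := add_mul_drazin_mul_inv_eq hdad had hab hdb hu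
  refine isDrazinInvertible_of_isNilpotent_sub hxw ?_ ?_
  · rw [← hxw.eq, hxw_eq, ← mul_assoc, had.eq, hdad]
  · rw [hxw_eq]
    exact isNilpotent_add_sub_mul_drazin_mul had hk hab hdb hb

open Paper in
/-- if `a` is Drazin invertible and `b` is nilpotent commuting with `a`, then
`a + b` is Drazin invertible. -/
theorem statement_14 {A : Type*} [Ring A] [Algebra ℂ A] (a b : A)
    (ha : IsDrazinInvertible a) (hb : IsNilpotent b) (hab : a * b = b * a) :
    IsDrazinInvertible (a + b) :=
  statement_14_general a b ha hb hab
end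
end
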